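/- Let P_0,…,P_M be probability measures and X a random variable with finite variance under each P_j. Then Σ_{j=1}^M (E_{P_j}[X] - E_{P_0}[X])² ≤ λ₁(χ²(P_0,…,P_M)) · Var_{P_0}(X) ≤ ‖χ²(P_0,…,P_M)‖_{1,∞} · Var_{P_0}(X), where λ₁ denotes the largest eigenvalue and ‖A‖_{1,∞} := max_i Σ_j |a_{ij}| is the maximum row sum norm, assuming P_j ≪ P_0 for all j. -/

import Mathlib

open MeasureTheory ProbabilityTheory Matrix

/-- The `M × M` chi-square divergence matrix of `P 0, P 1, …, P M`, with `(j,k)` entry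
`∫ (dP_j/dP_0) dP_k - 1`. -/
noncomputable def chiSqMatrix {Ω : Type*} [MeasurableSpace Ω] {M : ℕ}
    (P : Fin (M + 1) → Measure Ω) : Matrix (Fin M) (Fin M) ℝ :=
  Matrix.of fun j k => (∫ ω, ((P j.succ).rnDeriv (P 0) ω).toReal ∂(P k.succ)) - 1

/-!
In `L²(P₀)` put `ℓ_j = dP_j/dP₀ - 1` and `Y = X - E_{P₀}[X]`. Then the χ²-matrix is the Gram
matrix of the `ℓ_j`, `E_{P_j}[X] - E_{P₀}[X] = ⟪Y, ℓ_j⟫` and `Var_{P₀}(X) = ‖Y‖²`. For any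
vectors `v_j` with Gram matrix `G` and any `y`, Cauchy–Schwarz against `g = ∑ ⟪y, v_j⟫ v_j`
gives `(∑ ⟪y, v_j⟫²)² = ⟪y, g⟫² ≤ ‖y‖² ‖g‖² ≤ ‖y‖² λ_max(G) ∑ ⟪y, v_j⟫²`, which is the first
inequality. The second is Gershgorin's theorem.
-/

open scoped InnerProductSpace

namespace Matrix

variable {n : Type*} [Fintype n] [DecidableEq n] {A : Matrix n n ℝ}

namespace IsHermitian

theorem dotProduct_mulVec_le_iSup_eigenvalues_mul (hA : A.IsHermitian) (x : n → ℝ) :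
    x ⬝ᵥ A *ᵥ x ≤ (⨆ i, hA.eigenvalues i) * (x ⬝ᵥ x) := by
  set b := hA.eigenvectorBasis
  set c : n → ℝ := fun i => ⟪b i, WithLp.toLp 2 x⟫_ℝ
  have hAt : Aᵀ = A := by simpa [conjTranspose_eq_transpose_of_trivial] using hA.eq
  have hexpand (y : n → ℝ) : x ⬝ᵥ y = ∑ i, c i * ⟪b i, WithLp.toLp 2 y⟫_ℝ := by
    rw [dotProduct_comm, ← star_trivial x, ← EuclideanSpace.inner_eq_star_dotProduct,
      ← b.sum_inner_mul_inner]
    simp only [c, real_inner_comm (b _)]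
  have hc (i : n) : ⟪b i, WithLp.toLp 2 (A *ᵥ x)⟫_ℝ = hA.eigenvalues i * c i := by
    simp only [c, EuclideanSpace.inner_eq_star_dotProduct, star_trivial]
    rw [dotProduct_comm, dotProduct_mulVec, ← mulVec_transpose, hAt, mulVec_eigenvectorBasis,
      smul_dotProduct, smul_eq_mul, dotProduct_comm]
  rw [hexpand, hexpand, Finset.mul_sum]
  refine Finset.sum_le_sum fun i _ => ?_
  rw [hc, show ⟪b i, WithLp.toLp 2 x⟫_ℝ = c i from rfl, mul_left_comm]
  exact mul_le_mul_of_nonneg_right (le_ciSup (Set.finite_range _).bddAbove i) (mul_self_nonneg _)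

theorem hasEigenvalue_toLin'_eigenvalues (hA : A.IsHermitian) (i : n) :
    Module.End.HasEigenvalue (toLin' A) (hA.eigenvalues i) := by
  refine Module.End.hasEigenvalue_of_hasEigenvector (x := ⇑(hA.eigenvectorBasis i)) ⟨?_, ?_⟩
  · rw [Module.End.mem_eigenspace_iff, toLin'_apply, mulVec_eigenvectorBasis]
  · simpa using hA.eigenvectorBasis.orthonormal.ne_zero i

theorem eigenvalues_le_iSup_sum_abs (hA : A.IsHermitian) (i : n) :
    hA.eigenvalues i ≤ ⨆ k, ∑ j, |A k j| := by
  obtain ⟨k, hk⟩ := eigenvalue_mem_ball (hA.hasEigenvalue_toLin'_eigenvalues i)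
  rw [Metric.mem_closedBall, Real.dist_eq] at hk
  simp only [Real.norm_eq_abs] at hk
  calc hA.eigenvalues i ≤ |A k k| + ∑ j ∈ Finset.univ.erase k, |A k j| := by
        linarith [le_abs_self (A k k), le_abs_self (hA.eigenvalues i - A k k)]
    _ = ∑ j, |A k j| := Finset.add_sum_erase _ (fun j => |A k j|) (Finset.mem_univ k)
    _ ≤ ⨆ k, ∑ j, |A k j| := le_ciSup (f := fun k => ∑ j, |A k j|) (Set.finite_range _).bddAbove k

theorem iSup_eigenvalues_le_iSup_sum_abs (hA : A.IsHermitian) :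
    ⨆ i, hA.eigenvalues i ≤ ⨆ k, ∑ j, |A k j| :=
  Real.iSup_le hA.eigenvalues_le_iSup_sum_abs <|
    Real.iSup_nonneg fun _ => Finset.sum_nonneg fun _ _ => abs_nonneg _

end IsHermitian

theorem PosSemidef.iSup_eigenvalues_nonneg (hA : A.PosSemidef) :
    0 ≤ ⨆ i, hA.isHermitian.eigenvalues i :=
  Real.iSup_nonneg hA.eigenvalues_nonneg

end Matrix

theorem sum_inner_sq_le_iSup_eigenvalues_mul_norm_sq {E ι : Type*} [NormedAddCommGroup E]
    [InnerProductSpace ℝ E] [Fintype ι] [DecidableEq ι] {v : ι → E} {A : Matrix ι ι ℝ}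
    (hA : A.IsHermitian) (hAv : A = gram ℝ v) (y : E) :
    ∑ i, ⟪y, v i⟫_ℝ ^ 2 ≤ (⨆ i, hA.eigenvalues i) * ‖y‖ ^ 2 := by
  subst hAv
  set c : ι → ℝ := fun i => ⟪y, v i⟫_ℝ
  set g : E := ∑ i, c i • v i
  set S := ∑ i, c i ^ 2
  have hyg : ⟪y, g⟫_ℝ = S := by
    simp only [g, S, inner_sum, inner_smul_right, sq, c]
  have hg : ‖g‖ ^ 2 ≤ (⨆ i, hA.eigenvalues i) * S := by
    have := hA.dotProduct_mulVec_le_iSup_eigenvalues_mul c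
    rwa [← star_trivial c, star_dotProduct_gram_mulVec, star_trivial, real_inner_self_eq_norm_sq,
      dotProduct, ← Finset.sum_congr rfl fun i _ => sq (c i)] at this
  have hCS : S ^ 2 ≤ ‖y‖ ^ 2 * ((⨆ i, hA.eigenvalues i) * S) :=
    calc S ^ 2 = ⟪y, g⟫_ℝ ^ 2 := by rw [hyg]
      _ ≤ (‖y‖ * ‖g‖) ^ 2 := sq_le_sq.mpr <| (abs_real_inner_le_norm y g).trans (le_abs_self _)
      _ ≤ _ := by rw [mul_pow]; gcongr
  rcases (Finset.sum_nonneg fun i _ => sq_nonneg (c i) : 0 ≤ S).eq_or_lt with hS | hS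
  · rw [show S = 0 from hS.symm]
    exact mul_nonneg (posSemidef_gram ℝ v).iSup_eigenvalues_nonneg (sq_nonneg _)
  · nlinarith

section RadonNikodym

variable {Ω : Type*} [MeasurableSpace Ω] {μ ν ν' : Measure Ω}

theorem MeasureTheory.MemLp.inner_toLp_eq_integral_mul {f g : Ω → ℝ} (hf : MemLp f 2 μ)
    (hg : MemLp g 2 μ) : ⟪hf.toLp f, hg.toLp g⟫_ℝ = ∫ ω, f ω * g ω ∂μ := by
  rw [L2.inner_def]
  refine integral_congr_ae ?_
  filter_upwards [hf.coeFn_toLp, hg.coeFn_toLp] with ω hfω hgω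
  rw [hfω, hgω, real_inner_eq_re_inner, RCLike.inner_apply]
  simp [mul_comm]

theorem memLp_two_toReal_rnDeriv [SigmaFinite μ] [SigmaFinite ν] (hνμ : ν ≪ μ)
    (h : Integrable (fun ω => (ν.rnDeriv μ ω).toReal) ν) :
    MemLp (fun ω => (ν.rnDeriv μ ω).toReal) 2 μ := by
  refine (memLp_two_iff_integrable_sq
    (Measure.measurable_rnDeriv ν μ).ennreal_toReal.aestronglyMeasurable).mpr ?_
  simpa only [sq] using (integrable_toReal_rnDeriv_mul_iff hνμ).mpr h

theorem integral_mul_toReal_rnDeriv_sub_one [SigmaFinite μ] [SigmaFinite ν] (hνμ : ν ≪ μ)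
    {f : Ω → ℝ} (hfν : Integrable f ν) (hfμ : Integrable f μ) :
    ∫ ω, f ω * ((ν.rnDeriv μ ω).toReal - 1) ∂μ = ∫ ω, f ω ∂ν - ∫ ω, f ω ∂μ := by
  have hfL : Integrable (fun ω => (ν.rnDeriv μ ω).toReal * f ω) μ :=
    (integrable_toReal_rnDeriv_mul_iff hνμ).mpr hfν
  simp_rw [mul_sub, mul_one, mul_comm (f _)]
  rw [integral_sub hfL hfμ, integral_toReal_rnDeriv_mul hνμ]

theorem integral_toReal_rnDeriv_sub_one_mul_toReal_rnDeriv_sub_one [IsProbabilityMeasure μ]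
    [IsProbabilityMeasure ν] [IsProbabilityMeasure ν'] (hνμ : ν ≪ μ) (hν'μ : ν' ≪ μ)
    (h : Integrable (fun ω => (ν.rnDeriv μ ω).toReal) ν') :
    ∫ ω, ((ν.rnDeriv μ ω).toReal - 1) * ((ν'.rnDeriv μ ω).toReal - 1) ∂μ =
      ∫ ω, (ν.rnDeriv μ ω).toReal ∂ν' - 1 := by
  have hLμ : Integrable (fun ω => (ν.rnDeriv μ ω).toReal) μ := Measure.integrable_toReal_rnDeriv
  rw [integral_mul_toReal_rnDeriv_sub_one (f := fun ω => (ν.rnDeriv μ ω).toReal - 1) hν'μ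
      (h.sub (integrable_const 1)) (hLμ.sub (integrable_const 1)),
    integral_sub h (integrable_const 1), integral_sub hLμ (integrable_const 1),
    Measure.integral_toReal_rnDeriv hνμ]
  simp

end RadonNikodym

/-- `Σ_j (E_{P_j}[X]-E_{P_0}[X])² ≤ λ₁(χ²(P_0,…,P_M)) Var_{P_0}(X)
  ≤ ‖χ²(P_0,…,P_M)‖_{1,∞} Var_{P_0}(X)`,
where `λ₁` is the largest eigenvalue and `‖A‖_{1,∞} = max_i Σ_j |a_{ij}|` is the maximum
row sum norm. -/
theorem stmt13 {Ω : Type*} [MeasurableSpace Ω] {M : ℕ}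
    (P : Fin (M + 1) → Measure Ω) [∀ j, IsProbabilityMeasure (P j)]
    (hAC : ∀ j : Fin M, P j.succ ≪ P 0)
    (hInt : ∀ j k : Fin M,
      Integrable (fun ω => ((P j.succ).rnDeriv (P 0) ω).toReal) (P k.succ))
    (X : Ω → ℝ) (hX : ∀ j, MemLp X 2 (P j))
    (hA : (chiSqMatrix P).IsHermitian) :
    (∑ j : Fin M, ((∫ ω, X ω ∂(P j.succ)) - ∫ ω, X ω ∂(P 0)) ^ 2 ≤
      (⨆ i, hA.eigenvalues i) * variance X (P 0)) ∧
    (⨆ i, hA.eigenvalues i) * variance X (P 0) ≤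
      (⨆ i : Fin M, ∑ j : Fin M, |chiSqMatrix P i j|) * variance X (P 0) := by
  let L : Fin M → Ω → ℝ := fun j ω => ((P j.succ).rnDeriv (P 0) ω).toReal - 1
  have hL (j : Fin M) : MemLp (L j) 2 (P 0) :=
    (memLp_two_toReal_rnDeriv (hAC j) (hInt j j)).sub (memLp_const 1)
  have hY : MemLp (fun ω => X ω - (P 0)[X]) 2 (P 0) := (hX 0).sub (memLp_const _)
  have hgram : chiSqMatrix P = gram ℝ fun j => (hL j).toLp (L j) := by
    ext j k
    rw [gram_apply, MemLp.inner_toLp_eq_integral_mul,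
      integral_toReal_rnDeriv_sub_one_mul_toReal_rnDeriv_sub_one (hAC j) (hAC k) (hInt j k)]
    rfl
  have hmean (j : Fin M) :
      (∫ ω, X ω ∂(P j.succ)) - ∫ ω, X ω ∂(P 0) = ⟪hY.toLp _, (hL j).toLp (L j)⟫_ℝ := by
    rw [MemLp.inner_toLp_eq_integral_mul, integral_mul_toReal_rnDeriv_sub_one (hAC j)
      (f := fun ω => X ω - (P 0)[X])
      (((hX j.succ).integrable one_le_two).sub (integrable_const _)) (hY.integrable one_le_two),
      integral_sub ((hX j.succ).integrable one_le_two) (integrable_const _),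
      integral_sub ((hX 0).integrable one_le_two) (integrable_const _)]
    simp
  have hvar : variance X (P 0) = ‖hY.toLp _‖ ^ 2 := by
    rw [← real_inner_self_eq_norm_sq, MemLp.inner_toLp_eq_integral_mul,
      variance_eq_integral (hX 0).aestronglyMeasurable.aemeasurable]
    simp only [sq]
  refine ⟨?_, mul_le_mul_of_nonneg_right hA.iSup_eigenvalues_le_iSup_sum_abs (variance_nonneg _ _)⟩
  simp only [hmean, hvar]
  exact sum_inner_sq_le_iSup_eigenvalues_mul_norm_sq hA hgram _
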